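/- arXiv:gr-qc/0210035 — 2 statements merged into one kernel-verified Lean document; each statement's English description precedes it below -/
import Mathlib

section
/- Let G : ℝ → ℝ be continuous on [0, ∞) and let x_c > 0 be the smallest positive root of x·G(x) = 1 (or x_c = +∞ if no such root exists). Let r : (0, v₁] → ℝ be a positive C¹ solution of dr/dv = G(v/r) with v_i/r(v_i) < x_c at some point v_i ∈ (0, v₁]. Then the function x(v) := v/r(v) is strictly increasing on (0, v_i] and satisfies 0 ≤ x(v) < x_c for all v ∈ (0, v_i]. -/
/-!
Along the curve, `x(v) = v / r(v)` satisfies `x' = (1 - x G(x)) / r`. Below the first root `x_c`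
of `x G(x) = 1` the numerator is positive (it equals `1` at `x = 0` and cannot change sign without
passing through a root), so `x` increases wherever it lies in `[0, x_c)`. Running backwards from
`v_i`, where `x < x_c`, the curve therefore can never have been at or above `x_c`: at the last
time it was, the mean value theorem would force `x` to decrease towards `v_i`.
-/

open Set

lemma mul_lt_one_below_first_root {G : ℝ → ℝ} (hG : ContinuousOn G (Ici 0)) {xc : ℝ}
    (hnoroot : ∀ x ∈ Ioo (0 : ℝ) xc, x * G x ≠ 1) {y : ℝ} (hy₀ : 0 ≤ y) (hy : y < xc) :
    y * G y < 1 := by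
  by_contra! hle
  have hcont : ContinuousOn (fun z => z * G z) (Icc 0 y) :=
    continuousOn_id.mul (hG.mono fun _ hz => hz.1)
  obtain ⟨z, hz, hz1⟩ := intermediate_value_Icc hy₀ hcont ⟨by simp, hle⟩
  have hz₀ : z ≠ 0 := by rintro rfl; simp at hz1
  exact hnoroot z ⟨hz.1.lt_of_ne' hz₀, hz.2.trans_lt hy⟩ hz1

lemma HasDerivAt.id_div {r : ℝ → ℝ} {r' v : ℝ} (hr : HasDerivAt r r' v) (hv : r v ≠ 0) :
    HasDerivAt (fun v => v / r v) ((1 - v / r v * r') / r v) v := by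
  refine ((hasDerivAt_id' v).div hr hv).congr_deriv ?_
  field_simp

lemma forall_lt_of_hasDerivAt_pos_of_lt {F F' : ℝ → ℝ} {a b c : ℝ}
    (hF : ContinuousOn F (Icc a b)) (hderiv : ∀ t ∈ Ioo a b, HasDerivAt F (F' t) t)
    (hpos : ∀ t ∈ Ioo a b, F t < c → 0 < F' t) (hb : F b < c) :
    ∀ t ∈ Icc a b, F t < c := by
  by_contra! ⟨t₀, ht₀, hct₀⟩
  set T := Icc a b ∩ F ⁻¹' Ici c
  have hT : IsCompact T :=
    isCompact_Icc.of_isClosed_subset (hF.preimage_isClosed_of_isClosed isClosed_Icc isClosed_Ici)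
      inter_subset_left
  set s := sSup T
  obtain ⟨⟨-, hsb⟩, hcs : c ≤ F s⟩ : s ∈ T := hT.sSup_mem ⟨t₀, ht₀, hct₀⟩
  have hsb : s < b := hsb.lt_of_ne fun h => (h ▸ hb).not_ge hcs
  have has : a ≤ s := ht₀.1.trans (le_csSup hT.bddAbove ⟨ht₀, hct₀⟩)
  have hbelow : ∀ t ∈ Ioo s b, F t < c := fun t ht => lt_of_not_ge fun hct =>
    ht.1.not_ge (le_csSup hT.bddAbove ⟨⟨has.trans ht.1.le, ht.2.le⟩, hct⟩)
  obtain ⟨ξ, hξ, hslope⟩ :=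
    exists_hasDerivAt_eq_slope F F' hsb (hF.mono (Icc_subset_Icc has le_rfl)) fun t ht =>
      hderiv t ⟨has.trans_lt ht.1, ht.2⟩
  have hrise : 0 < (F b - F s) / (b - s) :=
    hslope ▸ hpos ξ ⟨has.trans_lt hξ.1, hξ.2⟩ (hbelow ξ hξ)
  linarith [(div_pos_iff_of_pos_right (sub_pos.2 hsb)).1 hrise]

theorem similarity_variable_monotone_on_null_curve_general
    (G : ℝ → ℝ) (hGcont : ContinuousOn G (Set.Ici 0))
    (xc : ℝ)
    (hnoroot : ∀ x ∈ Set.Ioo (0:ℝ) xc, x * G x ≠ 1)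
    (v₁ : ℝ) (r : ℝ → ℝ)
    (hrpos : ∀ v ∈ Set.Ioc (0:ℝ) v₁, 0 < r v)
    (hode : ∀ v ∈ Set.Ioc (0:ℝ) v₁, HasDerivAt r (G (v / r v)) v)
    (vi : ℝ) (hvi : vi ∈ Set.Ioc (0:ℝ) v₁) (hxi : vi / r vi < xc) :
    StrictMonoOn (fun v => v / r v) (Set.Ioc (0:ℝ) vi) ∧
      ∀ v ∈ Set.Ioc (0:ℝ) vi, 0 ≤ v / r v ∧ v / r v < xc := by
  set x : ℝ → ℝ := fun v => v / r v
  have hsub : Ioc 0 vi ⊆ Ioc 0 v₁ := Ioc_subset_Ioc_right hvi.2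
  have hx : ∀ v ∈ Ioc 0 vi, HasDerivAt x ((1 - x v * G (x v)) / r v) v := fun v hv =>
    (hode v (hsub hv)).id_div (hrpos v (hsub hv)).ne'
  have hx₀ : ∀ v ∈ Ioc 0 vi, 0 ≤ x v := fun v hv =>
    div_nonneg hv.1.le (hrpos v (hsub hv)).le
  have hx' : ∀ v ∈ Ioc 0 vi, x v < xc → 0 < (1 - x v * G (x v)) / r v := fun v hv hxv =>
    div_pos (sub_pos.2 (mul_lt_one_below_first_root hGcont hnoroot (hx₀ v hv) hxv))
      (hrpos v (hsub hv))
  have hcont : ContinuousOn x (Ioc 0 vi) := fun v hv =>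
    (hx v hv).continuousAt.continuousWithinAt
  have hlt : ∀ v ∈ Ioc 0 vi, x v < xc := fun v hv =>
    have hIcc : Icc v vi ⊆ Ioc 0 vi := Icc_subset_Ioc_iff hv.2 |>.2 ⟨hv.1, le_rfl⟩
    forall_lt_of_hasDerivAt_pos_of_lt (hcont.mono hIcc)
      (fun t ht => hx t (hIcc (Ioo_subset_Icc_self ht)))
      (fun t ht => hx' t (hIcc (Ioo_subset_Icc_self ht))) hxi v ⟨le_rfl, hv.2⟩
  refine ⟨strictMonoOn_of_deriv_pos (convex_Ioc 0 vi) hcont fun v hv => ?_,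
    fun v hv => ⟨hx₀ v hv, hlt v hv⟩⟩
  rw [interior_Ioc] at hv
  rw [(hx v (Ioo_subset_Ioc_self hv)).deriv]
  exact hx' v (Ioo_subset_Ioc_self hv) (hlt v (Ioo_subset_Ioc_self hv))

/-- Proposition 1 (core): along an outgoing radial null curve `dr/dv = G(v/r)` with
`v_i/r(v_i)` below the first positive root `x_c` of `x G(x) = 1`, the similarity variable
`x(v) = v/r(v)` is strictly increasing and stays in `[0, x_c)`. -/
theorem similarity_variable_monotone_on_null_curve
    (G : ℝ → ℝ) (hGcont : ContinuousOn G (Set.Ici 0))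
    (xc : ℝ) (hxc : 0 < xc)
    (hnoroot : ∀ x ∈ Set.Ioo (0:ℝ) xc, x * G x ≠ 1)
    (v₁ : ℝ) (hv₁ : 0 < v₁) (r : ℝ → ℝ)
    (hrpos : ∀ v ∈ Set.Ioc (0:ℝ) v₁, 0 < r v)
    (hode : ∀ v ∈ Set.Ioc (0:ℝ) v₁, HasDerivAt r (G (v / r v)) v)
    (vi : ℝ) (hvi : vi ∈ Set.Ioc (0:ℝ) v₁) (hxi : vi / r vi < xc) :
    StrictMonoOn (fun v => v / r v) (Set.Ioc (0:ℝ) vi) ∧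
      ∀ v ∈ Set.Ioc (0:ℝ) vi, 0 ≤ v / r v ∧ v / r v < xc :=
  similarity_variable_monotone_on_null_curve_general G hGcont xc hnoroot v₁ r hrpos hode vi hvi hxi
end

section
/- Let G : [0, ∞) → ℝ be continuous with G(x) < 1/x for all x > 0. Let r : (0, v₁] → (0, ∞) be a C¹ solution of dr/dv = G(v/r). If r(v) → 0 as v ↓ 0, then the limit x_l := lim_{v↓0} v/r(v) exists, is finite, and satisfies x_l · G(x_l) = 1 — a contradiction. Hence r(v) is bounded away from 0 as v ↓ 0. -/
/-!
Along a solution, the similarity variable `x = v / r` satisfies `x' = (r - v G(x)) / r² ≥ 0`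
because `x G(x) < 1`, so `x` has a limit `x_l ≥ 0` as `v ↓ 0`, and then `r' = G(x) → G(x_l)`.
If `r → 0`, l'Hôpital's rule gives `r / v → G(x_l)`, hence `x_l G(x_l) = 1`, which the
hypothesis on `G` excludes. Since `r'` is bounded below near `0`, `r` itself has a limit there,
and that limit is therefore positive.
-/

open Set Filter Topology

/-- Subtracting `c v` makes `f` monotone; its lower bound keeps the limit finite. -/
theorem exists_tendsto_nhdsGT_of_hasDerivAt_ge {f f' : ℝ → ℝ} {a c m : ℝ}
    (hf : ∀ᶠ v in 𝓝[>] a, HasDerivAt f (f' v) v ∧ c ≤ f' v ∧ m ≤ f v) :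
    ∃ l, Tendsto f (𝓝[>] a) (𝓝 l) := by
  obtain ⟨b, hab, hb⟩ := mem_nhdsGT_iff_exists_Ioc_subset.mp hf
  have hIoo : ∀ v ∈ Ioo a b, HasDerivAt f (f' v) v ∧ c ≤ f' v ∧ m ≤ f v :=
    fun v hv => hb (Ioo_subset_Ioc_self hv)
  have hderiv : ∀ v ∈ Ioo a b, HasDerivAt (fun v => f v - v * c) (f' v - c) v :=
    fun v hv => (hIoo v hv).1.sub (hasDerivAt_mul_const c)
  have hmono : MonotoneOn (fun v => f v - v * c) (Ioo a b) := by
    refine monotoneOn_of_hasDerivWithinAt_nonneg (f' := fun v => f' v - c) (convex_Ioo a b)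
      (fun v hv => (hderiv v hv).continuousAt.continuousWithinAt)
      (fun v hv => ?_) (fun v hv => ?_)
    all_goals rw [interior_Ioo] at hv
    · exact (hderiv v hv).hasDerivWithinAt
    · exact sub_nonneg.2 (hIoo v hv).2.1
  have hbdd : BddBelow ((fun v => f v - v * c) '' Ioo a b) := by
    refine ⟨m - max (a * c) (b * c), ?_⟩
    rintro _ ⟨v, hv, rfl⟩
    have hvc : v * c ≤ max (a * c) (b * c) := by
      rcases le_total 0 c with hc | hc
      · exact (mul_le_mul_of_nonneg_right hv.2.le hc).trans (le_max_right _ _)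
      · exact (mul_le_mul_of_nonpos_right hv.1.le hc).trans (le_max_left _ _)
    linarith [(hIoo v hv).2.2]
  have hlin : Tendsto (fun v : ℝ => v * c) (𝓝[>] a) (𝓝 (a * c)) :=
    ((continuous_mul_const c).tendsto a).mono_left nhdsWithin_le_nhds
  exact ⟨_, ((hmono.tendsto_nhdsWithin_Ioo_right (nonempty_Ioo.2 hab) hbdd).add hlin).congr
    fun v => sub_add_cancel (f v) (v * c)⟩

section SelfSimilar

variable {G r : ℝ → ℝ}

theorem mul_lt_one_of_lt_one_div (hG : ∀ x : ℝ, 0 < x → G x < 1 / x) {x : ℝ} (hx : 0 < x) :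
    x * G x < 1 := by
  simpa [mul_comm] using (lt_div_iff₀ hx).1 (hG x hx)

theorem mul_ne_one_of_lt_one_div (hG : ∀ x : ℝ, 0 < x → G x < 1 / x) {x : ℝ} (hx : 0 ≤ x) :
    x * G x ≠ 1 := by
  rcases hx.eq_or_lt with rfl | hx
  · simp
  · exact (mul_lt_one_of_lt_one_div hG hx).ne

theorem exists_tendsto_div_nhdsGT_of_hasDerivAt (hG : ∀ x : ℝ, 0 < x → G x < 1 / x)
    (hsol : ∀ᶠ v in 𝓝[>] 0, 0 < r v ∧ HasDerivAt r (G (v / r v)) v) :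
    ∃ xl, 0 ≤ xl ∧ Tendsto (fun v => v / r v) (𝓝[>] 0) (𝓝 xl) := by
  have hderiv : ∀ᶠ v in 𝓝[>] 0, HasDerivAt (fun v => v / r v)
      ((1 * r v - v * G (v / r v)) / r v ^ 2) v ∧
      0 ≤ (1 * r v - v * G (v / r v)) / r v ^ 2 ∧ 0 ≤ v / r v := by
    filter_upwards [hsol, self_mem_nhdsWithin] with v ⟨hr, hode⟩ (hv : 0 < v)
    have hx : 0 < v / r v := div_pos hv hr
    -- `v G(x) = r · x G(x) < r`
    have hlt : v * G (v / r v) < r v := by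
      have := mul_lt_mul_of_pos_left (mul_lt_one_of_lt_one_div hG hx) hr
      rwa [← mul_assoc, mul_div_cancel₀ v hr.ne', mul_one] at this
    exact ⟨(hasDerivAt_id' v).div hode hr.ne', div_nonneg (by linarith) (sq_nonneg _), hx.le⟩
  obtain ⟨xl, hxl⟩ := exists_tendsto_nhdsGT_of_hasDerivAt_ge hderiv
  exact ⟨xl, ge_of_tendsto hxl (hderiv.mono fun v h => h.2.2), hxl⟩

theorem mul_eq_one_of_tendsto_zero {xl : ℝ}
    (hsol : ∀ᶠ v in 𝓝[>] 0, 0 < r v ∧ HasDerivAt r (G (v / r v)) v)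
    (hxl : Tendsto (fun v => v / r v) (𝓝[>] 0) (𝓝 xl))
    (hGx : Tendsto (fun v => G (v / r v)) (𝓝[>] 0) (𝓝 (G xl)))
    (hr0 : Tendsto r (𝓝[>] 0) (𝓝 0)) :
    xl * G xl = 1 := by
  have hslope : Tendsto (fun v => r v / v) (𝓝[>] 0) (𝓝 (G xl)) :=
    HasDerivAt.lhopital_zero_nhdsGT (hsol.mono fun v h => h.2)
      (Eventually.of_forall hasDerivAt_id') (Eventually.of_forall fun _ => one_ne_zero) hr0
      nhdsWithin_le_nhds (by simpa using hGx)
  refine tendsto_nhds_unique (hxl.mul hslope) (tendsto_const_nhds.congr' ?_)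
  filter_upwards [hsol, self_mem_nhdsWithin] with v h (hv : 0 < v)
  field_simp [h.1.ne', hv.ne']

theorem exists_tendsto_nhdsGT_of_tendsto_deriv {L : ℝ}
    (hsol : ∀ᶠ v in 𝓝[>] 0, 0 < r v ∧ HasDerivAt r (G (v / r v)) v)
    (hGx : Tendsto (fun v => G (v / r v)) (𝓝[>] 0) (𝓝 L)) :
    ∃ R, 0 ≤ R ∧ Tendsto r (𝓝[>] 0) (𝓝 R) := by
  have hbound : ∀ᶠ v in 𝓝[>] 0,
      HasDerivAt r (G (v / r v)) v ∧ L - 1 ≤ G (v / r v) ∧ 0 ≤ r v := by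
    filter_upwards [hsol, hGx.eventually (eventually_ge_nhds (sub_one_lt L))] with v h hL
    exact ⟨h.2, hL, h.1.le⟩
  obtain ⟨R, hR⟩ := exists_tendsto_nhdsGT_of_hasDerivAt_ge hbound
  exact ⟨R, ge_of_tendsto hR (hbound.mono fun v h => h.2.2), hR⟩

end SelfSimilar

/-- Corollary 1: if `x G(x) < 1` for all `x > 0`, then along a solution of `dr/dv = G(v/r)`
the radius cannot tend to `0` as `v ↓ 0` (else `x_l = lim v/r` would exist and satisfy
`x_l G(x_l) = 1`, a contradiction); hence `r` is bounded away from `0` as `v ↓ 0`. -/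
theorem radius_bounded_away_from_zero
    (G : ℝ → ℝ) (hGcont : ContinuousOn G (Set.Ici 0))
    (hG : ∀ x : ℝ, 0 < x → G x < 1 / x)
    (v₁ : ℝ) (hv₁ : 0 < v₁) (r : ℝ → ℝ)
    (hrpos : ∀ v ∈ Set.Ioc (0:ℝ) v₁, 0 < r v)
    (hode : ∀ v ∈ Set.Ioc (0:ℝ) v₁, HasDerivAt r (G (v / r v)) v) :
    (Filter.Tendsto r (nhdsWithin 0 (Set.Ioi 0)) (nhds 0) →
      ∃ xl : ℝ, Filter.Tendsto (fun v => v / r v) (nhdsWithin 0 (Set.Ioi 0)) (nhds xl) ∧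
        xl * G xl = 1) ∧
    ¬ Filter.Tendsto r (nhdsWithin 0 (Set.Ioi 0)) (nhds 0) ∧
    ∃ ε > (0:ℝ), ∀ᶠ v in nhdsWithin 0 (Set.Ioi 0), ε ≤ r v := by
  have hsol : ∀ᶠ v in 𝓝[>] 0, 0 < r v ∧ HasDerivAt r (G (v / r v)) v :=
    mem_of_superset (Ioc_mem_nhdsGT hv₁) fun v hv => ⟨hrpos v hv, hode v hv⟩
  obtain ⟨xl, hxl0, hxl⟩ := exists_tendsto_div_nhdsGT_of_hasDerivAt hG hsol
  have hGx : Tendsto (fun v => G (v / r v)) (𝓝[>] 0) (𝓝 (G xl)) := by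
    refine (hGcont xl hxl0).tendsto.comp (tendsto_nhdsWithin_iff.2 ⟨hxl, ?_⟩)
    filter_upwards [hsol, self_mem_nhdsWithin] with v h (hv : 0 < v)
    exact (div_pos hv h.1).le
  have hcollapse (hr0 : Tendsto r (𝓝[>] 0) (𝓝 0)) : xl * G xl = 1 :=
    mul_eq_one_of_tendsto_zero hsol hxl hGx hr0
  have hnot : ¬ Tendsto r (𝓝[>] 0) (𝓝 0) :=
    fun hr0 => mul_ne_one_of_lt_one_div hG hxl0 (hcollapse hr0)
  obtain ⟨R, hR0, hR⟩ := exists_tendsto_nhdsGT_of_tendsto_deriv hsol hGx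
  have hRpos : 0 < R := hR0.lt_of_ne fun h => hnot (h ▸ hR)
  exact ⟨fun hr0 => ⟨xl, hxl, hcollapse hr0⟩, hnot, R / 2, half_pos hRpos,
    hR.eventually (eventually_ge_nhds (half_lt_self hRpos))⟩
end
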